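/- Let (x̄,ū) be a W^{1,1} local minimizer for (FP3). Then there is no subsegment [t1,t2] ⊆ [t0,T] with t1 < t2 such that x̄(t) = −1 for all t ∈ [t1,t2]. -/

import Mathlib

/-!
If `x̄ = -1` on `[t1, t2]`, the state equation forces `ū = 0` a.e. there (Lebesgue
differentiation). Lifting the state by a small smooth bump `ψ ≥ 0` supported in `(t1, t2)`,
with control `ū - ψ' / a`, keeps the process feasible and `W^{1,1}`-close; integrating by parts,
the cost changes by `-(1 - λ / a) ∫ e^{-λt} ψ < 0`, contradicting local minimality.
-/

open MeasureTheory Set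

noncomputable section

/-- A feasible process for problem (FP3): `x` is the (absolutely continuous) state
trajectory, represented as the indefinite integral of its a.e. derivative `-a*u`,
`u` is a measurable control with values in `[-1,1]` a.e., the initial condition is
`x t0 = x0`, and the bilateral state constraint `-1 ≤ x t ≤ 1` holds on `[t0,T]`. -/
def FP3Feasible (a t0 T x0 : ℝ) (x u : ℝ → ℝ) : Prop :=
  AEStronglyMeasurable u (volume.restrict (Icc t0 T)) ∧
  (∀ᵐ t ∂(volume.restrict (Icc t0 T)), u t ∈ Icc (-1 : ℝ) 1) ∧
  (∀ t ∈ Icc t0 T, x t = x0 + ∫ s in t0..t, -(a * u s)) ∧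
  (∀ t ∈ Icc t0 T, x t ∈ Icc (-1 : ℝ) 1)

/-- The cost functional of (FP3) on the interval `[t1,t2]`. -/
def FP3Cost (lam t1 t2 : ℝ) (x u : ℝ → ℝ) : ℝ :=
  ∫ t in t1..t2, -(Real.exp (-(lam * t)) * (x t + u t))

/-- `(x,u)` is a `W^{1,1}` local minimizer of (FP3). -/
def FP3LocalMin (a lam t0 T x0 : ℝ) (x u : ℝ → ℝ) : Prop :=
  FP3Feasible a t0 T x0 x u ∧
  ∃ δ > (0 : ℝ), ∀ y v, FP3Feasible a t0 T x0 y v →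
    (∫ t in t0..T, |(-(a * v t)) - (-(a * u t))|) ≤ δ →
    FP3Cost lam t0 T x u ≤ FP3Cost lam t0 T y v

/-- `(x,u)` is a `W^{1,1}` global minimizer of (FP3). -/
def FP3GlobalMin (a lam t0 T x0 : ℝ) (x u : ℝ → ℝ) : Prop :=
  FP3Feasible a t0 T x0 x u ∧
  ∀ y v, FP3Feasible a t0 T x0 y v → FP3Cost lam t0 T x u ≤ FP3Cost lam t0 T y v

/-- The function `Δ(t1,t2) = e^{-λ t1} - 2 e^{-λ (t1+t2)/2} + e^{-λ t2}`. -/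
def FP3Delta (lam t1 t2 : ℝ) : ℝ :=
  Real.exp (-(lam * t1)) - 2 * Real.exp (-(lam * (t1 + t2) / 2)) + Real.exp (-(lam * t2))

/-- The characteristic constant `ρ = (1/λ) ln (a/(a-λ))` of (FP3). -/
def FP3rho (a lam : ℝ) : ℝ := (1 / lam) * Real.log (a / (a - lam))

end

open Function Real

theorem IntervalIntegrable.ae_eq_zero_of_primitive_eqOn_const {E : Type*} [NormedAddCommGroup E]
    [NormedSpace ℝ E] [CompleteSpace E] {f : ℝ → E} {a b c : ℝ} {C : E} {U : Set ℝ}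
    (hf : IntervalIntegrable f volume a b) (hc : c ∈ uIcc a b) (hU : IsOpen U)
    (hUab : U ⊆ uIcc a b) (hconst : ∀ x ∈ U, ∫ t in c..x, f t = C) :
    ∀ᵐ x, x ∈ U → f x = 0 := by
  filter_upwards [hf.ae_hasDerivAt_integral] with x hderiv hxU
  have hloc : (fun y => ∫ t in c..y, f t) =ᶠ[nhds x] fun _ => C :=
    Filter.eventually_of_mem (hU.mem_nhds hxU) hconst
  exact (hderiv (hUab hxU) c hc).unique ((hasDerivAt_const x C).congr_of_eventuallyEq hloc)

theorem support_deriv_subset_support_of_nonneg {f : ℝ → ℝ} (hf : ∀ x, 0 ≤ f x) :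
    support (deriv f) ⊆ support f := by
  intro x hx hfx
  have hmin : IsLocalMin f x := Filter.Eventually.of_forall fun y => by
    rw [hfx]; exact hf y
  exact hx hmin.deriv_eq_zero

theorem exists_contDiff_support_eq_Ioo {a b η : ℝ} (hab : a < b) (hη : 0 < η) :
    ∃ ψ : ℝ → ℝ, ContDiff ℝ 1 ψ ∧ support ψ = Ioo a b ∧
      ∀ t, 0 ≤ ψ t ∧ ψ t ≤ η ∧ |deriv ψ t| ≤ η := by
  let φ : ContDiffBump ((a + b) / 2) := ⟨(b - a) / 4, (b - a) / 2, by linarith, by linarith⟩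
  obtain ⟨M, hM⟩ := (φ.contDiff.continuous_deriv le_rfl).bounded_above_of_compact_support
    φ.hasCompactSupport.deriv
  have hM1 : 0 < max 1 M := lt_max_of_lt_left one_pos
  set ε := η / max 1 M
  have hε : 0 < ε := div_pos hη hM1
  have hεη : ε ≤ η := div_le_self hη.le (le_max_left 1 M)
  refine ⟨fun t => ε * φ t, contDiff_const.mul φ.contDiff, ?_, fun t => ⟨?_, ?_, ?_⟩⟩
  · rw [support_mul, support_const hε.ne', univ_inter, φ.support_eq, Real.ball_eq_Ioo]
    congr 1 <;> simp only [φ] <;> ring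
  · exact mul_nonneg hε.le φ.nonneg
  · exact (mul_le_of_le_one_right hε.le φ.le_one).trans hεη
  · rw [deriv_const_mul_field', abs_mul, abs_of_pos hε]
    calc ε * |deriv φ t| ≤ ε * max 1 M := by
          gcongr; exact (Real.norm_eq_abs _ ▸ hM t).trans (le_max_right 1 M)
      _ = η := div_mul_cancel₀ η hM1.ne'

namespace FP3Feasible

variable {a t0 T x0 : ℝ} {x u : ℝ → ℝ}

theorem integrableOn_control (h : FP3Feasible a t0 T x0 x u) : IntegrableOn u (Icc t0 T) :=
  Integrable.mono' (g := fun _ => 1) (integrableOn_const measure_Icc_lt_top.ne) h.1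
    (h.2.1.mono fun t ht => by simpa [abs_le] using ht)

theorem continuousOn_state (h : FP3Feasible a t0 T x0 x u) : ContinuousOn x (Icc t0 T) := by
  have hprim : ContinuousOn (fun t => ∫ s in Ioc t0 t, -(a * u s)) (Icc t0 T) :=
    intervalIntegral.continuousOn_primitive (h.integrableOn_control.const_mul a).neg
  refine ((continuousOn_const (c := x0)).add hprim).congr fun t ht => ?_
  rw [h.2.2.1 t ht, intervalIntegral.integral_of_le ht.1]
  rfl

theorem control_ae_eq_zero (h : FP3Feasible a t0 T x0 x u) (hT : t0 ≤ T) (ha : a ≠ 0)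
    {U : Set ℝ} {C : ℝ} (hU : IsOpen U) (hUT : U ⊆ Icc t0 T) (hx : ∀ t ∈ U, x t = C) :
    ∀ᵐ t, t ∈ U → u t = 0 := by
  have hf : IntervalIntegrable (fun s => -(a * u s)) volume t0 T :=
    (intervalIntegrable_iff_integrableOn_Icc_of_le hT).2 (h.integrableOn_control.const_mul a).neg
  have hprim : ∀ t ∈ U, ∫ s in t0..t, -(a * u s) = C - x0 := fun t ht => by
    rw [← hx t ht, h.2.2.1 t (hUT ht), add_sub_cancel_left]
  filter_upwards [hf.ae_eq_zero_of_primitive_eqOn_const left_mem_uIcc hU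
    (hUT.trans Icc_subset_uIcc) hprim] with t hau htU
  exact (mul_eq_zero.1 (neg_eq_zero.1 (hau htU))).resolve_left ha

theorem add_of_contDiff (h : FP3Feasible a t0 T x0 x u) (ha : a ≠ 0) {ψ : ℝ → ℝ}
    (hψ : ContDiff ℝ 1 ψ) (hψ0 : ψ t0 = 0) (hx : ∀ t ∈ Icc t0 T, x t + ψ t ∈ Icc (-1 : ℝ) 1)
    (hu : ∀ᵐ t ∂(volume.restrict (Icc t0 T)), u t - deriv ψ t / a ∈ Icc (-1 : ℝ) 1) :
    FP3Feasible a t0 T x0 (fun t => x t + ψ t) (fun t => u t - deriv ψ t / a) := by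
  have hψ' : Continuous (deriv ψ) := hψ.continuous_deriv le_rfl
  refine ⟨h.1.sub (hψ'.div_const a).aestronglyMeasurable, hu, fun t ht => ?_, hx⟩
  have hu_int : IntervalIntegrable (fun s => -(a * u s)) volume t0 t :=
    (IntegrableOn.mono_set (h.integrableOn_control.const_mul a).neg
      (uIcc_subset_Icc (left_mem_Icc.2 (ht.1.trans ht.2)) ht)).intervalIntegrable
  calc x t + ψ t = x0 + ((∫ s in t0..t, -(a * u s)) + ∫ s in t0..t, deriv ψ s) := by
        rw [intervalIntegral.integral_deriv_eq_sub (fun s _ => hψ.differentiable one_ne_zero s)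
          (hψ'.intervalIntegrable _ _), hψ0, sub_zero, h.2.2.1 t ht, add_assoc]
    _ = x0 + ∫ s in t0..t, -(a * (u s - deriv ψ s / a)) := by
        rw [← intervalIntegral.integral_add hu_int (hψ'.intervalIntegrable _ _)]
        congr 1
        refine intervalIntegral.integral_congr fun s _ => ?_
        field_simp
        ring

theorem add_bump (h : FP3Feasible a t0 T x0 x u) (ha : 0 < a) {t1 t2 : ℝ} (ht1 : t0 ≤ t1)
    (hx : ∀ t ∈ Ioo t1 t2, x t = -1) (hu : ∀ᵐ t, t ∈ Ioo t1 t2 → u t = 0) {ψ : ℝ → ℝ}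
    (hψ : ContDiff ℝ 1 ψ) (hsupp : support ψ ⊆ Ioo t1 t2) (hψ_nonneg : ∀ t, 0 ≤ ψ t)
    (hψ_le : ∀ t, ψ t ≤ 2) (hψ'_le : ∀ t, |deriv ψ t| ≤ a) :
    FP3Feasible a t0 T x0 (fun t => x t + ψ t) (fun t => u t - deriv ψ t / a) := by
  have hout : ∀ {f : ℝ → ℝ} {t}, support f ⊆ Ioo t1 t2 → t ∉ Ioo t1 t2 → f t = 0 :=
    fun hf ht => notMem_support.1 fun hft => ht (hf hft)
  refine h.add_of_contDiff ha.ne' hψ (hout hsupp fun ht => ht.1.not_ge ht1) (fun t ht => ?_) ?_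
  · by_cases htI : t ∈ Ioo t1 t2
    · rw [hx t htI]
      constructor <;> linarith [hψ_nonneg t, hψ_le t]
    · rw [hout hsupp htI, add_zero]
      exact h.2.2.2 t ht
  · filter_upwards [h.2.1, ae_restrict_of_ae hu] with t hut hu0
    by_cases htI : t ∈ Ioo t1 t2
    · have hda : |deriv ψ t / a| ≤ 1 := by
        rw [abs_div, abs_of_pos ha, div_le_one ha]
        exact hψ'_le t
      rw [hu0 htI, zero_sub, mem_Icc]
      constructor <;> linarith [abs_le.1 hda]
    · rw [hout ((support_deriv_subset_support_of_nonneg hψ_nonneg).trans hsupp) htI, zero_div,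
        sub_zero]
      exact hut

theorem cost_add_of_contDiff (h : FP3Feasible a t0 T x0 x u) (hT : t0 ≤ T) (ha : a ≠ 0)
    (lam : ℝ) {ψ : ℝ → ℝ} (hψ : ContDiff ℝ 1 ψ) (hψ0 : ψ t0 = 0) (hψT : ψ T = 0) :
    FP3Cost lam t0 T (fun t => x t + ψ t) (fun t => u t - deriv ψ t / a) =
      FP3Cost lam t0 T x u - (1 - lam / a) * ∫ t in t0..T, exp (-(lam * t)) * ψ t := by
  have he : ∀ t, HasDerivAt (fun t => exp (-(lam * t))) (-lam * exp (-(lam * t))) t := fun t => by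
    simpa [mul_comm] using ((hasDerivAt_id t).const_mul lam).neg.exp
  have hψ' : Continuous (deriv ψ) := hψ.continuous_deriv le_rfl
  have hxu : IntervalIntegrable (fun t => -(exp (-(lam * t)) * (x t + u t))) volume t0 T :=
    (((h.continuousOn_state.intervalIntegrable_of_Icc hT).add
      ((intervalIntegrable_iff_integrableOn_Icc_of_le hT).2
        h.integrableOn_control)).continuousOn_mul (by fun_prop)).neg
  have hparts : ∫ t in t0..T, exp (-(lam * t)) * deriv ψ t =
      lam * ∫ t in t0..T, exp (-(lam * t)) * ψ t := by
    rw [intervalIntegral.integral_mul_deriv_eq_deriv_mul (fun t _ => he t)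
      (fun t _ => (hψ.differentiable one_ne_zero t).hasDerivAt)
      ((by fun_prop : Continuous fun t => -lam * exp (-(lam * t))).intervalIntegrable _ _)
      (hψ'.intervalIntegrable _ _), hψ0, hψT]
    simp only [mul_zero, sub_self, zero_sub, neg_mul, mul_assoc, intervalIntegral.integral_neg,
      intervalIntegral.integral_const_mul, neg_neg]
  have hψI : IntervalIntegrable (fun t => exp (-(lam * t)) * ψ t) volume t0 T :=
    (by fun_prop : Continuous fun t => exp (-(lam * t)) * ψ t).intervalIntegrable _ _
  have hψ'I : IntervalIntegrable (fun t => a⁻¹ * (exp (-(lam * t)) * deriv ψ t)) volume t0 T :=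
    (by fun_prop : Continuous fun t => a⁻¹ * (exp (-(lam * t)) * deriv ψ t)).intervalIntegrable _ _
  unfold FP3Cost
  calc ∫ t in t0..T, -(exp (-(lam * t)) * (x t + ψ t + (u t - deriv ψ t / a)))
      = ∫ t in t0..T, (-(exp (-(lam * t)) * (x t + u t)) +
          (a⁻¹ * (exp (-(lam * t)) * deriv ψ t) - exp (-(lam * t)) * ψ t)) :=
        intervalIntegral.integral_congr fun t _ => by ring
    _ = (∫ t in t0..T, -(exp (-(lam * t)) * (x t + u t))) +
          (a⁻¹ * ∫ t in t0..T, exp (-(lam * t)) * deriv ψ t) -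
          ∫ t in t0..T, exp (-(lam * t)) * ψ t := by
        rw [intervalIntegral.integral_add hxu (hψ'I.sub hψI),
          intervalIntegral.integral_sub hψ'I hψI, intervalIntegral.integral_const_mul,
          add_sub_assoc]
    _ = _ := by
        rw [hparts]
        field_simp
        ring

end FP3Feasible

theorem integral_exp_mul_pos {lam t0 T t1 t2 : ℝ} {ψ : ℝ → ℝ} (hψ : Continuous ψ)
    (hψ_nonneg : ∀ t, 0 ≤ ψ t) (hsupp : support ψ = Ioo t1 t2) (h12 : t1 < t2)
    (hsub : Ioo t1 t2 ⊆ Ioc t0 T) : 0 < ∫ t in t0..T, exp (-(lam * t)) * ψ t := by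
  obtain ⟨s, hs⟩ := nonempty_Ioo.2 h12
  rw [intervalIntegral.integral_pos_iff_support_of_nonneg_ae
    (ae_of_all _ fun t => mul_nonneg (exp_pos _).le (hψ_nonneg t))
    ((by fun_prop : Continuous _).intervalIntegrable _ _)]
  refine ⟨(hsub hs).1.trans_le (hsub hs).2, ?_⟩
  rw [support_mul, hsupp, inter_assoc, inter_eq_left.2 hsub]
  simp [support, exp_ne_zero, h12]

theorem integral_abs_velocity_sub_le {a t0 T η : ℝ} {u ψ : ℝ → ℝ} (ha : a ≠ 0) (hT : t0 ≤ T)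
    (hψ : ContDiff ℝ 1 ψ) (hψ' : ∀ t, |deriv ψ t| ≤ η) :
    ∫ t in t0..T, |-(a * (u t - deriv ψ t / a)) - -(a * u t)| ≤ η * (T - t0) := calc
  _ = ∫ t in t0..T, |deriv ψ t| := intervalIntegral.integral_congr fun t _ => by
        field_simp; ring_nf
  _ ≤ ∫ _ in t0..T, η := intervalIntegral.integral_mono_on hT
        ((hψ.continuous_deriv le_rfl).abs.intervalIntegrable _ _) intervalIntegrable_const
        fun t _ => hψ' t
  _ = η * (T - t0) := by rw [intervalIntegral.integral_const, smul_eq_mul, mul_comm]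

theorem fp3_no_lower_boundary_segment_general
    (a lam t0 T x0 : ℝ) (hal : lam < a) (hlam : 0 < lam)
    (xb ub : ℝ → ℝ) (hmin : FP3LocalMin a lam t0 T x0 xb ub) :
    ¬ ∃ t1 t2 : ℝ, t0 ≤ t1 ∧ t1 < t2 ∧ t2 ≤ T ∧ ∀ t ∈ Icc t1 t2, xb t = -1 := by
  rintro ⟨t1, t2, ht1, h12, ht2, hflat⟩
  obtain ⟨hfeas, δ, hδ, hloc⟩ := hmin
  have ha : 0 < a := hlam.trans hal
  have hT : t0 < T := by linarith
  have hx : ∀ t ∈ Ioo t1 t2, xb t = -1 := fun t ht => hflat t (Ioo_subset_Icc_self ht)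
  have hu := hfeas.control_ae_eq_zero hT.le ha.ne' isOpen_Ioo
    (Ioo_subset_Icc_self.trans (Icc_subset_Icc ht1 ht2)) hx
  -- `η ≤ 2` keeps the state below `1`, `η ≤ a` keeps the control in `[-1, 1]`,
  -- and `η * (T - t0) ≤ δ` keeps the perturbed process `δ`-close in `W^{1,1}`.
  obtain ⟨ψ, hψ, hsupp, hψη⟩ :=
    exists_contDiff_support_eq_Ioo (η := min (min 2 a) (δ / (T - t0))) h12
      (lt_min (lt_min two_pos ha) (div_pos hδ (sub_pos.2 hT)))
  have hfeas' := hfeas.add_bump ha ht1 hx hu hψ hsupp.subset (fun t => (hψη t).1)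
    (fun t => (hψη t).2.1.trans ((min_le_left _ _).trans (min_le_left _ _)))
    (fun t => (hψη t).2.2.trans ((min_le_left _ _).trans (min_le_right _ _)))
  have hdist := (integral_abs_velocity_sub_le (u := ub) ha.ne' hT.le hψ fun t => (hψη t).2.2).trans
    ((le_div_iff₀ (sub_pos.2 hT)).1 (min_le_right _ _))
  have hcost := hfeas.cost_add_of_contDiff hT.le ha.ne' lam hψ
    (notMem_support.1 fun h => (hsupp.subset h).1.not_ge ht1)
    (notMem_support.1 fun h => (hsupp.subset h).2.not_ge ht2)
  have hpos := integral_exp_mul_pos (lam := lam) hψ.continuous (fun t => (hψη t).1) hsupp h12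
    fun t ht => ⟨ht1.trans_lt ht.1, ht.2.le.trans ht2⟩
  have hfac : 0 < 1 - lam / a := by rw [sub_pos, div_lt_one ha]; exact hal
  linarith [hloc _ _ hfeas' hdist, mul_pos hfac hpos]

/-- Proposition 3.6: the trajectory of a local minimizer cannot
stay at the lower boundary `-1` on any nondegenerate subsegment of `[t0,T]`. -/
theorem fp3_no_lower_boundary_segment
    (a lam t0 T x0 : ℝ) (hal : lam < a) (hlam : 0 < lam)
    (ht0 : 0 ≤ t0) (htT : t0 < T) (hx0 : x0 ∈ Icc (-1 : ℝ) 1)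
    (xb ub : ℝ → ℝ) (hmin : FP3LocalMin a lam t0 T x0 xb ub) :
    ¬ ∃ t1 t2 : ℝ, t0 ≤ t1 ∧ t1 < t2 ∧ t2 ≤ T ∧ ∀ t ∈ Icc t1 t2, xb t = -1 :=
  fp3_no_lower_boundary_segment_general a lam t0 T x0 hal hlam xb ub hmin
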